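/- Let n ≥ 3. A bipartition of n is a pair (λ', λ'') of partitions with |λ'| + |λ''| = n. Define ff_n(λ', λ'') in the free abelian group on bipartitions of n−1 by ff_n(λ', λ'') = Σ (μ', λ'') + Σ (λ', μ''), where μ' runs over the partitions obtained from λ' by decreasing by 1 a part λ'_i with λ'_i > λ'_{i+1}, and μ'' similarly for λ''. If (λ', λ'') and (ν', ν'') are bipartitions of n with ff_n(λ', λ'') = ff_n(ν', ν''), then (λ', λ'') = (ν', ν''). -/

import Mathlib

open scoped Classical

noncomputable section

/-- `lam : ℕ → ℕ` is a partition of `n`: a weakly decreasing sequence of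
nonnegative integers, eventually zero, with sum `n`. -/
def IsPartitionFun (n : ℕ) (lam : ℕ → ℕ) : Prop :=
  Antitone lam ∧ (Function.support lam).Finite ∧ ∑ᶠ i, lam i = n

/-- `f_n(λ) = Σ_{i : λ_i > λ_{i+1}} [λ with λ_i decreased by 1]`, an element of the
free abelian group on sequences (for partitions `λ` of `n`, all terms are
partitions of `n−1`, so equality of such elements is equality in the free
abelian group `(P_{n-1})` on partitions of `n−1`). -/
def partDec (lam : ℕ → ℕ) : FreeAbelianGroup (ℕ → ℕ) :=
  ∑ᶠ i ∈ {i : ℕ | lam (i + 1) < lam i},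
    FreeAbelianGroup.of (Function.update lam i (lam i - 1))

/-- `p = (λ', λ'')` is a bipartition of `n`: `λ'`, `λ''` are partitions with
`|λ'| + |λ''| = n`. -/
def IsBipartitionFun (n : ℕ) (p : (ℕ → ℕ) × (ℕ → ℕ)) : Prop :=
  ∃ a b : ℕ, IsPartitionFun a p.1 ∧ IsPartitionFun b p.2 ∧ a + b = n

/-- `ff_n(λ', λ'') = f(λ') ⊗ λ'' + λ' ⊗ f(λ'')`, an element of the free abelian
group on pairs of sequences (for bipartitions of `n`, all terms are bipartitions
of `n−1`, so equalities below are equalities in the free abelian group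
`(BP_{n-1})` on bipartitions of `n−1`). -/
def bipartDec (p : (ℕ → ℕ) × (ℕ → ℕ)) : FreeAbelianGroup ((ℕ → ℕ) × (ℕ → ℕ)) :=
  (∑ᶠ i ∈ {i : ℕ | p.1 (i + 1) < p.1 i},
    FreeAbelianGroup.of (Function.update p.1 i (p.1 i - 1), p.2)) +
  (∑ᶠ i ∈ {i : ℕ | p.2 (i + 1) < p.2 i},
    FreeAbelianGroup.of (p.1, Function.update p.2 i (p.2 i - 1)))

/-! Encode a bipartition `p` as the function `Sum.elim p.1 p.2 : ℕ ⊕ ℕ → ℕ`. As `ff_n(p)` is a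
sum of generators without cancellation, its support is the set of children of `p`: the
lowerings of this function by one at its corners, distinct for distinct corners. Hence `ff_n(p)`
determines the number of corners of `p`. If `p` has two corners, every
coordinate of `p` survives in some child, so `p` is the pointwise maximum of its children. If
`p` has a single corner, it is a rectangle in one component and empty in the other, and a
common child of two such shapes of size `n ≥ 3` forces them to be equal. -/

open Function FreeAbelianGroup

theorem FreeAbelianGroup.coe_support_finsum_mem_of {ι X : Type*} {s : Set ι} (hs : s.Finite)
    (g : ι → X) : ((∑ᶠ i ∈ s, of (g i)).support : Set X) = g '' s := by
  ext x
  have hnonneg : ∀ i ∈ hs.toFinset, 0 ≤ coeff x (of (g i)) := fun i _ => by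
    simp [coeff, Finsupp.single_apply, apply_ite]
  rw [Finset.mem_coe, mem_support_iff, finsum_mem_eq_finite_toFinset_sum _ hs, map_sum, Ne,
    Finset.sum_eq_zero_iff_of_nonneg hnonneg]
  simp [coeff, Finsupp.single_apply]

namespace PartitionFun

section Lower

variable {α : Type*} [DecidableEq α] {F G : α → ℕ} {c x : α} {K L : Set α}

def lower (F : α → ℕ) (c : α) : α → ℕ := update F c (F c - 1)

@[simp]
theorem lower_apply_self : lower F c c = F c - 1 := update_self ..

theorem lower_apply_of_ne (h : x ≠ c) : lower F c x = F x := update_of_ne h ..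

theorem lower_le : lower F c ≤ F := by
  intro x
  rcases eq_or_ne x c with rfl | h
  · simp
  · rw [lower_apply_of_ne h]

theorem lower_injOn : {c | F c ≠ 0}.InjOn (lower F) := by
  intro c hc d _ h
  by_contra hcd
  have := congrFun h c
  rw [lower_apply_self, lower_apply_of_ne hcd] at this
  exact hc (by omega)

theorem eq_of_lower_eq (hF : F c ≠ 0) (hG : G c ≠ 0) (h : lower F c = lower G c) : F = G := by
  funext x
  have := congrFun h x
  rcases eq_or_ne x c with rfl | hx
  · rw [lower_apply_self, lower_apply_self] at this
    omega
  · rwa [lower_apply_of_ne hx, lower_apply_of_ne hx] at this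

theorem finsum_eq_one_of_lower_eq_zero (hc : F c ≠ 0) (h : lower F c = 0) : ∑ᶠ x, F x = 1 := by
  have hFc : F c = 1 := by
    have := congrFun h c
    rw [lower_apply_self, Pi.zero_apply] at this
    omega
  rw [finsum_eq_single F c fun x hx => by simpa [lower_apply_of_ne hx] using congrFun h x, hFc]

theorem nontrivial_iff_of_image_lower_eq (hF : ∀ c ∈ K, F c ≠ 0) (hG : ∀ d ∈ L, G d ≠ 0)
    (h : lower F '' K = lower G '' L) : K.Nontrivial ↔ L.Nontrivial := by
  rw [← (lower_injOn.mono hF).image_nontrivial_iff, ← (lower_injOn.mono hG).image_nontrivial_iff,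
    h]

-- `F x` survives in the lowering of `F` at any point of `K` other than `x`.
theorem le_of_image_lower_subset (hK : K.Nontrivial) (h : lower F '' K ⊆ lower G '' L) :
    F ≤ G := by
  intro x
  obtain ⟨c, hc, hcx⟩ := hK.exists_ne x
  obtain ⟨d, -, hdc⟩ := h (Set.mem_image_of_mem _ hc)
  calc F x = lower F c x := (lower_apply_of_ne hcx.symm).symm
    _ = lower G d x := by rw [hdc]
    _ ≤ G x := lower_le x

theorem eq_of_image_lower_eq (hK : K.Nontrivial) (hF : ∀ c ∈ K, F c ≠ 0)
    (hG : ∀ d ∈ L, G d ≠ 0) (h : lower F '' K = lower G '' L) : F = G :=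
  le_antisymm (le_of_image_lower_subset hK h.subset)
    (le_of_image_lower_subset ((nontrivial_iff_of_image_lower_eq hF hG h).1 hK) h.symm.subset)

end Lower

section Corners

variable {lam nu : ℕ → ℕ} {m n a b i j k : ℕ}

def corners (lam : ℕ → ℕ) : Set ℕ := {i | lam (i + 1) < lam i}

theorem ne_zero_of_mem_corners (h : i ∈ corners lam) : lam i ≠ 0 :=
  Nat.ne_zero_of_lt h

theorem corners_finite (h : (support lam).Finite) : (corners lam).Finite :=
  h.subset fun _ => ne_zero_of_mem_corners

theorem exists_mem_corners_of_lt (hjk : j ≤ k) (h : lam k < lam j) :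
    ∃ i ∈ corners lam, j ≤ i ∧ i < k := by
  induction k, hjk using Nat.le_induction with
  | base => omega
  | succ k hjk ih =>
    by_cases hk : k ∈ corners lam
    · exact ⟨k, hk, hjk, k.lt_succ_self⟩
    · have : lam k ≤ lam (k + 1) := not_lt.1 hk
      obtain ⟨i, hi, hji, hik⟩ := ih (by omega)
      exact ⟨i, hi, hji, by omega⟩

theorem exists_mem_corners_of_ne_zero (hfin : (support lam).Finite) (h : lam j ≠ 0) :
    ∃ i ∈ corners lam, j ≤ i := by
  obtain ⟨N, hN⟩ := hfin.bddAbove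
  have hjN : j ≤ N := hN h
  have hN1 : lam (N + 1) = 0 := by
    by_contra h'
    exact absurd (hN h') (by omega)
  obtain ⟨i, hi, hji, -⟩ :=
    exists_mem_corners_of_lt (lam := lam) (by omega : j ≤ N + 1) (by omega)
  exact ⟨i, hi, hji⟩

theorem apply_eq_zero_of_forall_corners_lt (hfin : (support lam).Finite)
    (h : ∀ i ∈ corners lam, i < j) : lam j = 0 := by
  by_contra hj
  obtain ⟨i, hi, hji⟩ := exists_mem_corners_of_ne_zero hfin hj
  exact absurd (h i hi) (by omega)

theorem apply_eq_of_corners_subset_singleton (hlam : Antitone lam) (ha : corners lam ⊆ {a})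
    (hj : j ≤ a) : lam j = lam a := by
  by_contra hne
  obtain ⟨i, hi, -, hia⟩ := exists_mem_corners_of_lt hj (lt_of_le_of_ne (hlam hj) (Ne.symm hne))
  exact absurd (ha hi) hia.ne

theorem corners_nonempty (hlam : IsPartitionFun m lam) (hm : m ≠ 0) : (corners lam).Nonempty := by
  obtain ⟨hanti, hfin, hsum⟩ := hlam
  obtain ⟨j, hj⟩ : ∃ j, lam j ≠ 0 := by
    by_contra! h
    rw [← hsum, finsum_eq_zero_of_forall_eq_zero h] at hm
    exact hm rfl
  obtain ⟨i, hi, -⟩ := exists_mem_corners_of_ne_zero hfin hj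
  exact ⟨i, hi⟩

-- Single-corner partitions are rectangles. A common child forces `lam = (2, …, 2)` with `a + 1`
-- rows and `nu = (1, …, 1)`; their rows `0` both survive in the child unless `lam = (2)`.
theorem false_of_lower_eq_of_lt (hlam : IsPartitionFun n lam) (hnu : IsPartitionFun n nu)
    (hn : 3 ≤ n) (hla : corners lam ⊆ {a}) (hb : b ∈ corners nu) (hnb : corners nu ⊆ {b})
    (hab : a < b) (h : lower lam a = lower nu b) : False := by
  have hlam0 : ∀ j, a < j → lam j = 0 := fun j hj =>
    apply_eq_zero_of_forall_corners_lt hlam.2.1 fun i hi => (hla hi).symm ▸ hj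
  have hnub : nu b = 1 := by
    have := congrFun h b
    rw [lower_apply_of_ne hab.ne', lower_apply_self, hlam0 b hab] at this
    have := ne_zero_of_mem_corners hb
    omega
  have hlama : lam a = 2 := by
    have := congrFun h a
    rw [lower_apply_self, lower_apply_of_ne hab.ne,
      apply_eq_of_corners_subset_singleton hnu.1 hnb hab.le, hnub] at this
    have := ne_zero_of_mem_corners hb
    omega
  rcases Nat.eq_zero_or_pos a with rfl | ha
  · have : ∑ᶠ j, lam j = 2 := by
      rw [finsum_eq_single lam 0 fun j hj => hlam0 j (Nat.pos_of_ne_zero hj), hlama]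
    have := hlam.2.2
    omega
  · have := congrFun h 0
    rw [lower_apply_of_ne ha.ne, lower_apply_of_ne (by omega),
      apply_eq_of_corners_subset_singleton hlam.1 hla ha.le,
      apply_eq_of_corners_subset_singleton hnu.1 hnb (by omega), hlama, hnub] at this
    omega

theorem eq_of_lower_eq_of_corners_subset (hlam : IsPartitionFun n lam) (hnu : IsPartitionFun n nu)
    (hn : 3 ≤ n) (ha : a ∈ corners lam) (hla : corners lam ⊆ {a}) (hb : b ∈ corners nu)
    (hnb : corners nu ⊆ {b}) (h : lower lam a = lower nu b) : a = b := by
  rcases lt_trichotomy a b with hab | rfl | hab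
  · exact (false_of_lower_eq_of_lt hlam hnu hn hla hb hnb hab h).elim
  · rfl
  · exact (false_of_lower_eq_of_lt hnu hlam hn hnb ha hla hab h.symm).elim

end Corners

section Bipartition

variable {n : ℕ} {p q : (ℕ → ℕ) × (ℕ → ℕ)} {c d : ℕ ⊕ ℕ}

def bicorners (p : (ℕ → ℕ) × (ℕ → ℕ)) : Set (ℕ ⊕ ℕ) :=
  Sum.inl '' corners p.1 ∪ Sum.inr '' corners p.2

theorem lower_elim_inl {α β : Type*} [DecidableEq α] [DecidableEq β] (f : α → ℕ) (g : β → ℕ)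
    (a : α) : lower (Sum.elim f g) (.inl a) = Sum.elim (lower f a) g :=
  (Sum.elim_update_left ..).symm

theorem lower_elim_inr {α β : Type*} [DecidableEq α] [DecidableEq β] (f : α → ℕ) (g : β → ℕ)
    (b : β) : lower (Sum.elim f g) (.inr b) = Sum.elim f (lower g b) :=
  (Sum.elim_update_right ..).symm

theorem elim_ne_zero_of_mem_bicorners (hc : c ∈ bicorners p) : Sum.elim p.1 p.2 c ≠ 0 := by
  rcases hc with ⟨i, hi, rfl⟩ | ⟨j, hj, rfl⟩ <;> exact ne_zero_of_mem_corners ‹_›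

theorem bicorners_finite (h1 : (support p.1).Finite) (h2 : (support p.2).Finite) :
    (bicorners p).Finite :=
  ((corners_finite h1).image _).union ((corners_finite h2).image _)

theorem bipartDec_eq_finsum (h1 : (support p.1).Finite) (h2 : (support p.2).Finite) :
    bipartDec p = ∑ᶠ c ∈ bicorners p,
      of (Equiv.sumArrowEquivProdArrow ℕ ℕ ℕ (lower (Sum.elim p.1 p.2) c)) := by
  rw [bicorners, finsum_mem_union Set.disjoint_image_inl_image_inr
    ((corners_finite h1).image _) ((corners_finite h2).image _),
    finsum_mem_image Sum.inl_injective.injOn, finsum_mem_image Sum.inr_injective.injOn]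
  simp only [lower_elim_inl, lower_elim_inr]
  rfl

theorem coe_support_bipartDec (h1 : (support p.1).Finite) (h2 : (support p.2).Finite) :
    ((bipartDec p).support : Set ((ℕ → ℕ) × (ℕ → ℕ))) =
      Equiv.sumArrowEquivProdArrow ℕ ℕ ℕ '' (lower (Sum.elim p.1 p.2) '' bicorners p) := by
  rw [bipartDec_eq_finsum h1 h2, coe_support_finsum_mem_of (bicorners_finite h1 h2),
    Set.image_image]

@[simp]
theorem inl_mem_bicorners {i : ℕ} : Sum.inl i ∈ bicorners p ↔ i ∈ corners p.1 := by
  simp [bicorners]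

@[simp]
theorem inr_mem_bicorners {j : ℕ} : Sum.inr j ∈ bicorners p ↔ j ∈ corners p.2 := by
  simp [bicorners]

theorem bicorners_nonempty (hp : IsBipartitionFun n p) (hn : n ≠ 0) : (bicorners p).Nonempty := by
  obtain ⟨a, b, hp1, hp2, rfl⟩ := hp
  rcases Nat.eq_zero_or_pos a with rfl | ha
  · obtain ⟨j, hj⟩ := corners_nonempty hp2 (by omega)
    exact ⟨.inr j, inr_mem_bicorners.2 hj⟩
  · obtain ⟨i, hi⟩ := corners_nonempty hp1 ha.ne'
    exact ⟨.inl i, inl_mem_bicorners.2 hi⟩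

theorem isPartitionFun_fst_of_bicorners_subset {a : ℕ} (hp : IsBipartitionFun n p)
    (ha : bicorners p ⊆ {.inl a}) : IsPartitionFun n p.1 ∧ corners p.1 ⊆ {a} ∧ p.2 = 0 := by
  obtain ⟨a1, b1, hp1, hp2, rfl⟩ := hp
  have hz : p.2 = 0 := funext fun j => apply_eq_zero_of_forall_corners_lt hp2.2.1
    fun i hi => absurd (ha (inr_mem_bicorners.2 hi)) Sum.inr_ne_inl
  have hb1 : b1 = 0 := by rw [← hp2.2.2, hz]; exact finsum_zero
  exact ⟨by rwa [hb1, add_zero],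
    fun i hi => Sum.inl_injective (ha (inl_mem_bicorners.2 hi)), hz⟩

theorem isPartitionFun_snd_of_bicorners_subset {b : ℕ} (hp : IsBipartitionFun n p)
    (hb : bicorners p ⊆ {.inr b}) : IsPartitionFun n p.2 ∧ corners p.2 ⊆ {b} ∧ p.1 = 0 := by
  obtain ⟨a1, b1, hp1, hp2, rfl⟩ := hp
  have hz : p.1 = 0 := funext fun j => apply_eq_zero_of_forall_corners_lt hp1.2.1
    fun i hi => absurd (hb (inl_mem_bicorners.2 hi)) Sum.inl_ne_inr
  have ha1 : a1 = 0 := by rw [← hp1.2.2, hz]; exact finsum_zero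
  exact ⟨by rwa [ha1, zero_add],
    fun i hi => Sum.inr_injective (hb (inr_mem_bicorners.2 hi)), hz⟩

theorem eq_of_lower_eq_of_bicorners_eq_singleton (hn : 3 ≤ n) (hp : IsBipartitionFun n p)
    (hq : IsBipartitionFun n q) (hpc : bicorners p = {c}) (hqd : bicorners q = {d})
    (h : lower (Sum.elim p.1 p.2) c = lower (Sum.elim q.1 q.2) d) : c = d := by
  have hc : c ∈ bicorners p := hpc ▸ rfl
  have hd : d ∈ bicorners q := hqd ▸ rfl
  have hsize {lam : ℕ → ℕ} {i : ℕ} (hlam : IsPartitionFun n lam) (hi : i ∈ corners lam)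
      (h0 : lower lam i = 0) : False := by
    have := hlam.2.2
    rw [finsum_eq_one_of_lower_eq_zero (ne_zero_of_mem_corners hi) h0] at this
    omega
  rcases c with a | a <;> rcases d with b | b <;>
    simp only [lower_elim_inl, lower_elim_inr] at h <;>
    simp only [inl_mem_bicorners, inr_mem_bicorners] at hc hd
  · obtain ⟨hp1, hpa, -⟩ := isPartitionFun_fst_of_bicorners_subset hp hpc.subset
    obtain ⟨hq1, hqb, -⟩ := isPartitionFun_fst_of_bicorners_subset hq hqd.subset
    rw [eq_of_lower_eq_of_corners_subset hp1 hq1 hn hc hpa hd hqb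
      (funext fun i => congrFun h (.inl i))]
  · obtain ⟨hp1, -, -⟩ := isPartitionFun_fst_of_bicorners_subset hp hpc.subset
    obtain ⟨-, -, hq1⟩ := isPartitionFun_snd_of_bicorners_subset hq hqd.subset
    exact (hsize hp1 hc ((funext fun i => congrFun h (.inl i)).trans hq1)).elim
  · obtain ⟨-, -, hp1⟩ := isPartitionFun_snd_of_bicorners_subset hp hpc.subset
    obtain ⟨hq1, -, -⟩ := isPartitionFun_fst_of_bicorners_subset hq hqd.subset
    exact (hsize hq1 hd ((funext fun i => congrFun h (.inl i)).symm.trans hp1)).elim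
  · obtain ⟨hp2, hpa, -⟩ := isPartitionFun_snd_of_bicorners_subset hp hpc.subset
    obtain ⟨hq2, hqb, -⟩ := isPartitionFun_snd_of_bicorners_subset hq hqd.subset
    rw [eq_of_lower_eq_of_corners_subset hp2 hq2 hn hc hpa hd hqb
      (funext fun i => congrFun h (.inr i))]

end Bipartition

end PartitionFun

open PartitionFun in
/-- for `n ≥ 3`, a bipartition `(λ', λ'')` of `n` is determined by
`ff_n(λ', λ'') ∈ (BP_{n-1})`. -/
theorem statement3 (n : ℕ) (hn : 3 ≤ n) (p q : (ℕ → ℕ) × (ℕ → ℕ))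
    (hp : IsBipartitionFun n p) (hq : IsBipartitionFun n q)
    (h : bipartDec p = bipartDec q) : p = q := by
  obtain ⟨a1, b1, hp1, hp2, -⟩ := id hp
  obtain ⟨a2, b2, hq1, hq2, -⟩ := id hq
  have hchildren : lower (Sum.elim p.1 p.2) '' bicorners p =
      lower (Sum.elim q.1 q.2) '' bicorners q := by
    have := congrArg (fun x => (x.support : Set ((ℕ → ℕ) × (ℕ → ℕ)))) h
    simp only [coe_support_bipartDec hp1.2.1 hp2.2.1, coe_support_bipartDec hq1.2.1 hq2.2.1]
      at this
    exact (Equiv.injective _).image_injective this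
  have hpc : ∀ c ∈ bicorners p, Sum.elim p.1 p.2 c ≠ 0 := fun _ => elim_ne_zero_of_mem_bicorners
  have hqd : ∀ d ∈ bicorners q, Sum.elim q.1 q.2 d ≠ 0 := fun _ => elim_ne_zero_of_mem_bicorners
  suffices Sum.elim p.1 p.2 = Sum.elim q.1 q.2 from
    (Equiv.sumArrowEquivProdArrow ℕ ℕ ℕ).symm.injective this
  rcases (bicorners p).subsingleton_or_nontrivial with hK | hK
  · obtain ⟨c, hc⟩ := bicorners_nonempty hp (by omega)
    obtain ⟨d, hd, hdc⟩ := hchildren ▸ Set.mem_image_of_mem (lower (Sum.elim p.1 p.2)) hc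
    have hL := Set.not_nontrivial_iff.1
      (mt (nontrivial_iff_of_image_lower_eq hpc hqd hchildren).2 hK.not_nontrivial)
    obtain rfl := eq_of_lower_eq_of_bicorners_eq_singleton hn hp hq (hK.eq_singleton_of_mem hc)
      (hL.eq_singleton_of_mem hd) hdc.symm
    exact eq_of_lower_eq (hpc c hc) (hqd c hd) hdc.symm
  · exact eq_of_image_lower_eq hK hpc hqd hchildren
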